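/- Let L = V ⊕ W be a color gLt-algebra admitting a quasi-multiplicative basis {e_i}_{i∈I} of W ≠ 0. Suppose L is centerless, i.e. Z(L) = {x ∈ L : ⟨x, L, …, L⟩_σ = 0 for all σ ∈ Sₙ} = 0, and V is tight, i.e. V = 0 or V = Σ_{i₁,…,iₙ ∈ I, μ(i₁,…,iₙ)={v}} 𝔽⟨e_{i₁},…,e_{iₙ}⟩. Then L = ⊕_{[i]∈I/∼} 𝔍_{[i]} is the direct sum of the color gLt-ideals 𝔍_{[i]}. -/

import Mathlib

set_option maxHeartbeats 1000000

/-- A (color) generalized Lie-type algebra: an `(n+2)`-ary `G`-graded algebra with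
bicharacter `epsilon` satisfying the (colored) generalized Lie-type identities with
structure constants `alpha` (allowed to depend on the degrees of the arguments). -/
structure ColorGLT (F : Type) [Field F] (G : Type) [AddCommGroup G] [DecidableEq G]
    (L : Type) [AddCommGroup L] [Module F L] (n : ℕ) where
  bracket : MultilinearMap F (fun _ : Fin (n + 2) => L) L
  grading : G → Submodule F L
  isInternal : DirectSum.IsInternal grading
  bracket_graded : ∀ (g : Fin (n + 2) → G) (x : Fin (n + 2) → L),
    (∀ t, x t ∈ grading (g t)) → bracket x ∈ grading (∑ t, g t)
  epsilon : G → G → F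
  epsilon_ne_zero : ∀ g h, epsilon g h ≠ 0
  epsilon_add_left : ∀ g h k, epsilon (g + h) k = epsilon g k * epsilon h k
  epsilon_add_right : ∀ g h k, epsilon k (g + h) = epsilon k g * epsilon k h
  epsilon_skew : ∀ g h, epsilon g h * epsilon h g = 1
  alpha : Fin (n + 2) → Fin (n + 2) → Fin (n + 2) → Equiv.Perm (Fin (n + 2)) →
      Equiv.Perm (Fin (n + 1)) → (Fin (n + 2) → G) → (Fin (n + 1) → G) → F
  glt : ∀ (k : Fin (n + 2)) (gx : Fin (n + 2) → G) (gy : Fin (n + 1) → G)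
      (x : Fin (n + 2) → L) (y : Fin (n + 1) → L),
      (∀ t, x t ∈ grading (gx t)) → (∀ t, y t ∈ grading (gy t)) →
      bracket (Fin.insertNth k (bracket x) y) =
        ∑ i : Fin (n + 2), ∑ j : Fin (n + 2), ∑ σ₁ : Equiv.Perm (Fin (n + 2)),
          ∑ σ₂ : Equiv.Perm (Fin (n + 1)),
            alpha i j k σ₁ σ₂ gx gy •
              bracket (Function.update (fun t => x (σ₁ t)) i
                (bracket (Fin.insertNth j (x (σ₁ i)) (fun t => y (σ₂ t)))))

namespace ColorGLT

variable {F : Type} [Field F] {G : Type} [AddCommGroup G] [DecidableEq G]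
    {L : Type} [AddCommGroup L] [Module F L] {n : ℕ}

/-- A color gLt-ideal: a graded subspace `S` with `⟨S, L, …, L⟩_σ ⊆ S` for all `σ ∈ Sₙ`. -/
def IsIdeal (A : ColorGLT F G L n) (S : Submodule F L) : Prop :=
  (S = ⨆ g : G, S ⊓ A.grading g) ∧
  ∀ (σ : Equiv.Perm (Fin (n + 2))) (x : Fin (n + 2) → L),
    x 0 ∈ S → A.bracket (fun t => x (σ t)) ∈ S

/-- `L` is centerless: `Z(L) = {x : ⟨x, L, …, L⟩_σ = 0 ∀ σ} = 0`. -/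
def Centerless (A : ColorGLT F G L n) : Prop :=
  ∀ x : L, (∀ (σ : Equiv.Perm (Fin (n + 2))) (y : Fin (n + 2) → L),
    y 0 = x → A.bracket (fun t => y (σ t)) = 0) → x = 0

end ColorGLT

/-- A quasi-multiplicative basis of a color gLt-algebra: `L = V ⊕ W`, with a homogeneous
basis `{e i}` of `W ≠ 0` satisfying the three quasi-multiplicativity conditions. -/
structure QMBasis {F : Type} [Field F] {G : Type} [AddCommGroup G] [DecidableEq G]
    {L : Type} [AddCommGroup L] [Module F L] {n : ℕ}
    (A : ColorGLT F G L n) (I : Type) where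
  V : Submodule F L
  W : Submodule F L
  compl : IsCompl V W
  W_ne_bot : W ≠ ⊥
  V_graded : V = ⨆ g : G, V ⊓ A.grading g
  W_graded : W = ⨆ g : G, W ⊓ A.grading g
  e : I → L
  deg : I → G
  e_homog : ∀ i, e i ∈ A.grading (deg i)
  e_indep : LinearIndependent F e
  e_span : Submodule.span F (Set.range e) = W
  qm1 : ∀ c : Fin (n + 2) → I,
    (∃ j, A.bracket (fun t => e (c t)) ∈ Submodule.span F {e j}) ∨
      A.bracket (fun t => e (c t)) ∈ V
  qm2 : ∀ (σ : Equiv.Perm (Fin (n + 2))) (S : Finset (Fin (n + 2))),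
    S.Nonempty → S ≠ Finset.univ → ∀ ind : Fin (n + 2) → I, ∃ j : I,
      ∀ x : Fin (n + 2) → L, (∀ t, t ∈ S → x t = e (ind t)) →
        (∀ t, t ∉ S → x t ∈ V) →
        A.bracket (fun t => x (σ t)) ∈ Submodule.span F {e j}
  qm3 : (∃ j, ∀ x : Fin (n + 2) → L, (∀ t, x t ∈ V) →
          A.bracket x ∈ Submodule.span F {e j}) ∨
        (∀ x : Fin (n + 2) → L, (∀ t, x t ∈ V) → A.bracket x ∈ V)

namespace QMBasis

variable {F : Type} [Field F] {G : Type} [AddCommGroup G] [DecidableEq G]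
    {L : Type} [AddCommGroup L] [Module F L] {n : ℕ} {I : Type}
    {A : ColorGLT F G L n}

/-- The set of elements represented by an index of `𝔉 = I ∪ {v}`: `e i` for `some i`,
the subspace `V` for `none` (= `v`). -/
def elemSet (B : QMBasis A I) : Option I → Set L
  | none => (B.V : Set L)
  | some i => {B.e i}

/-- The target set of an index of `𝔉`: the line `𝔽 e j` for `some j`, `V` for `v`. -/
def targetSet (B : QMBasis A I) : Option I → Set L
  | none => (B.V : Set L)
  | some j => (Submodule.span F {B.e j} : Set L)

/-- `x ∈ a_σ(c)`: the `σ`-permuted product of the elements represented by `c` is nonzero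
and lands in the target represented by `x`; the value `v` is only allowed for all-basis
or all-`V` tuples. -/
def aMem (B : QMBasis A I) (σ : Equiv.Perm (Fin (n + 2)))
    (c : Fin (n + 2) → Option I) (x : Option I) : Prop :=
  (∃ z : Fin (n + 2) → L, (∀ t, z t ∈ B.elemSet (c (σ t))) ∧ A.bracket z ≠ 0) ∧
  (∀ z : Fin (n + 2) → L, (∀ t, z t ∈ B.elemSet (c (σ t))) → A.bracket z ∈ B.targetSet x) ∧
  (x = none → ((∀ t, (c t).isSome = true) ∨ (∀ t, c t = none)))

/-- An admissible `(n+1)`-tuple over `𝔉 ∪ 𝔉̄`: all entries barred (`true`) or all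
unbarred (`false`). -/
abbrev Tup (I : Type) (n : ℕ) := Bool × (Fin (n + 1) → Option I)

/-- `x ∈ μ(j, X)` where `j ∈ 𝔉 ∪ 𝔉̄` (left = unbarred, right = barred) and `X` is an
admissible tuple; defined via `a_σ` and `b_σ` as in the paper. -/
def muMem (B : QMBasis A I) :
    Option I ⊕ Option I → Tup I n → Option I → Prop
  | Sum.inl j, (false, c), x => ∃ σ : Equiv.Perm (Fin (n + 2)), B.aMem σ (Fin.cons j c) x
  | Sum.inl j, (true, c), x => ∃ σ : Equiv.Perm (Fin (n + 2)), B.aMem σ (Fin.cons x c) j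
  | Sum.inr j, (false, c), x =>
      ∃ (k : Fin (n + 1)) (σ : Equiv.Perm (Fin (n + 2))),
        B.aMem σ (Fin.cons x (Fin.cons j (fun t => c (k.succAbove t)))) (c k)
  | Sum.inr _, (true, _), _ => False

/-- The map `φ : P(I ∪ Ī) × T → P(I ∪ Ī)`, `φ(J, X) = K ∪ K̄` with
`K = (⋃_{j ∈ J} μ(j, X)) \ {v}` (left = `I`, right = `Ī`). -/
def phi (B : QMBasis A I) (J : Set (I ⊕ I)) (X : Tup I n) : Set (I ⊕ I) :=
  {p | ∃ i : I, (p = Sum.inl i ∨ p = Sum.inr i) ∧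
    ∃ j ∈ J, B.muMem (Sum.map some some j) X (some i)}

/-- Iterated application of `φ` along a list of tuples. -/
def chain (B : QMBasis A I) : Set (I ⊕ I) → List (Tup I n) → Set (I ⊕ I)
  | s, [] => s
  | s, X :: r => chain B (B.phi s X) r

/-- The connection relation: `i` is connected to `j`. -/
def Connected (B : QMBasis A I) (i j : I) : Prop :=
  i = j ∨ ∃ (Xs : List (Tup I n)) (st : I ⊕ I),
    Xs ≠ [] ∧ (st = Sum.inl i ∨ st = Sum.inr i) ∧
    (∀ m, m < Xs.length → (chain B {st} (List.take m Xs)).Nonempty) ∧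
    Sum.inl j ∈ chain B {st} Xs

/-- The connection class `[i]` of `i`. -/
def cls (B : QMBasis A I) (i : I) : Set I := {j | B.Connected i j}

/-- `W_{[i]} = ⊕_{j ∈ [i]} 𝔽 e_j`. -/
def Wcls (B : QMBasis A I) (i : I) : Submodule F L :=
  Submodule.span F (B.e '' B.cls i)

/-- `V_{[i]} = (Σ_{i₁,…,iₙ ∈ [i]} 𝔽⟨e_{i₁},…,e_{iₙ}⟩) ∩ V`. -/
def Vcls (B : QMBasis A I) (i : I) : Submodule F L :=
  Submodule.span F {z : L | ∃ c : Fin (n + 2) → I,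
    (∀ t, c t ∈ B.cls i) ∧ z = A.bracket (fun t => B.e (c t))} ⊓ B.V

/-- `𝔍_{[i]} = V_{[i]} ⊕ W_{[i]}`. -/
def Jcls (B : QMBasis A I) (i : I) : Submodule F L := B.Vcls i ⊔ B.Wcls i

/-- `S` admits a quasi-multiplicative basis inherited from that of `L`:
`S = V_S ⊕ W_S` with `V_S ⊆ V` and `W_S ≠ 0` spanned by a subset of the `e i`. -/
def HasInheritedBasis (B : QMBasis A I) (S : Submodule F L) : Prop :=
  ∃ (V' : Submodule F L) (J' : Set I), V' ≤ B.V ∧ J'.Nonempty ∧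
    S = V' ⊔ Submodule.span F (B.e '' J')

/-- `V` is tight: `V = 0` or `V = Σ_{μ(i₁,…,iₙ) = {v}} 𝔽⟨e_{i₁},…,e_{iₙ}⟩`. -/
def Tight (B : QMBasis A I) : Prop :=
  B.V = ⊥ ∨
    B.V = Submodule.span F {z : L | ∃ c : Fin (n + 2) → I,
      ({x : Option I | ∃ σ, B.aMem σ (fun t => some (c t)) x} = {none}) ∧
      z = A.bracket (fun t => B.e (c t))}

/-- The set of elements represented by `u_{k}`: `u_k = e_k + e_{k̄}` (`= e` of the
underlying index, since `e_{j̄} = 0`) if `k ∉ {v, v̄}`, and `u_k = V` otherwise. -/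
def uSet (B : QMBasis A I) : Option I ⊕ Option I → Set L
  | Sum.inl none => (B.V : Set L)
  | Sum.inr none => (B.V : Set L)
  | Sum.inl (some i) => {B.e i}
  | Sum.inr (some i) => {B.e i}

/-- The full `(n+2)`-tuple `(k₁, …, kₙ)` over `𝔉 ∪ 𝔉̄` obtained from a first entry and
an admissible tuple. -/
def fullTup {I : Type} {n : ℕ} (k₁ : Option I ⊕ Option I) (X : Tup I n) :
    Fin (n + 2) → Option I ⊕ Option I :=
  Fin.cons k₁ (fun t => if X.1 then Sum.inr (X.2 t) else Sum.inl (X.2 t))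

/-- The basis is `μ`-quasi-multiplicative: whenever `i ∈ μ(k₁, …, kₙ)` then
`e i ∈ 𝔽⟨u_{k₁}, …, u_{kₙ}⟩_σ` for some `σ ∈ Sₙ`. -/
def MuQM (B : QMBasis A I) : Prop :=
  ∀ (k₁ : Option I ⊕ Option I) (X : Tup I n) (i : I),
    B.muMem k₁ X (some i) →
    ∃ (σ : Equiv.Perm (Fin (n + 2))) (z : Fin (n + 2) → L),
      (∀ t, z t ∈ B.uSet (fullTup k₁ X (σ t))) ∧
      B.e i ∈ Submodule.span F {A.bracket z}

end QMBasis

/-!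
`𝔍_[k]` is spanned by the basis vectors `e_j` and the products `⟨e_{j₁}, …, e_{jₙ}⟩` with all
indices in `[k]`. Tightness of `V` makes these elements span `L`, so `L = Σ 𝔍_[k]`.

A nonzero product of such elements taken from classes `[k₁], …, [kₙ]` forces all these classes to
coincide. For products of basis vectors this is the definition of the connection. A slot holding
an inner product `⟨e_{f₁}, …, e_{fₙ}⟩` is removed by the gLt identity: some term of the expansion
survives, and its inner factor is a nonzero product of `e_{f_a}` with the remaining slots, which
has one inner product fewer.

Hence every `x ∈ 𝔍_[i] ∩ Σ_{[j] ≠ [i]} 𝔍_[j]` satisfies `⟨x, L, …, L⟩_σ = 0`: expanding the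
other slots, a nonzero product would put them in `[i]` and also in some `[j] ≠ [i]`. So `x` is
central, and `x = 0`.
-/

theorem LinearMap.exists_apply_ne_zero_of_mem_span {R M N : Type*} [Semiring R]
    [AddCommMonoid M] [Module R M] [AddCommMonoid N] [Module R N] (f : M →ₗ[R] N) {s : Set M}
    {x : M} (hx : x ∈ Submodule.span R s) (hfx : f x ≠ 0) : ∃ y ∈ s, f y ≠ 0 := by
  by_contra! h
  exact hfx (LinearMap.eqOn_span (g := 0) h hx)

theorem MultilinearMap.exists_ne_zero_of_forall_mem_span {R ι N : Type*} {M : ι → Type*}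
    [Semiring R] [∀ i, AddCommMonoid (M i)] [∀ i, Module R (M i)] [AddCommMonoid N]
    [Module R N] [Fintype ι] [DecidableEq ι] (f : MultilinearMap R M N) {S : ∀ i, Set (M i)}
    {z : ∀ i, M i} (hz : ∀ i, z i ∈ Submodule.span R (S i)) (h : f z ≠ 0) :
    ∃ w : ∀ i, M i, (∀ i, w i ∈ S i) ∧ f w ≠ 0 := by
  suffices H : ∀ s : Finset ι, ∀ z : ∀ i, M i, (∀ i, z i ∈ Submodule.span R (S i)) →
      (∀ i ∉ s, z i ∈ S i) → f z ≠ 0 → ∃ w : ∀ i, M i, (∀ i, w i ∈ S i) ∧ f w ≠ 0 from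
    H Finset.univ z hz (fun i hi => absurd (Finset.mem_univ i) hi) h
  intro s
  induction s using Finset.induction with
  | empty => exact fun z _ hS h => ⟨z, fun i => hS i (Finset.notMem_empty i), h⟩
  | insert a s ha ih =>
    intro z hz hS h
    obtain ⟨y, hy, hfy⟩ := (f.toLinearMap z a).exists_apply_ne_zero_of_mem_span (hz a)
      (by simpa using h)
    refine ih (Function.update z a y) (fun i => ?_) (fun i hi => ?_) hfy
    all_goals rcases eq_or_ne i a with rfl | hia
    · simpa using Submodule.subset_span hy
    · simpa [hia] using hz i
    · simpa using hy
    · simpa [hia] using hS i (by simp [hia, hi])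

open Finset in
theorem Fin.card_filter_eq_card_filter_succAbove_add {m : ℕ} (P : Fin (m + 1) → Prop)
    [DecidablePred P] (p : Fin (m + 1)) :
    #{t | P t} = #{s | P (p.succAbove s)} + if P p then 1 else 0 := by
  simp only [Finset.card_filter]
  rw [Fin.sum_univ_succAbove _ p, add_comm]

open Finset in
theorem Equiv.Perm.card_filter_comp {α : Type*} [Fintype α] (σ : Equiv.Perm α) (P : α → Prop)
    [DecidablePred P] : #{s | P (σ s)} = #{s | P s} := by
  simp only [Finset.card_filter]
  exact Equiv.sum_comp σ fun s => if P s then 1 else 0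

theorem Equiv.Perm.exists_apply_eq_and_apply_eq {α : Type*} [DecidableEq α] {x y a b : α}
    (hxy : x ≠ y) (hab : a ≠ b) : ∃ π : Equiv.Perm α, π x = a ∧ π y = b := by
  have hb : Equiv.swap x a b ≠ x := by
    rw [Ne, Equiv.swap_apply_eq_iff, Equiv.swap_apply_left]
    exact hab.symm
  refine ⟨(Equiv.swap y (Equiv.swap x a b)).trans (Equiv.swap x a), ?_, ?_⟩
  · simp [Equiv.swap_apply_of_ne_of_ne hxy hb.symm]
  · simp

namespace ColorGLT

variable {F : Type} [Field F] {G : Type} [AddCommGroup G] [DecidableEq G]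
    {L : Type} [AddCommGroup L] [Module F L] {n : ℕ}

theorem exists_bracket_insertNth_ne_zero (A : ColorGLT F G L n) {k : Fin (n + 2)}
    {x : Fin (n + 2) → L} {y : Fin (n + 1) → L} (hx : ∀ t, ∃ g, x t ∈ A.grading g)
    (hy : ∀ t, ∃ g, y t ∈ A.grading g) (h : A.bracket (Fin.insertNth k (A.bracket x) y) ≠ 0) :
    ∃ (a j : Fin (n + 2)) (σ : Equiv.Perm (Fin (n + 1))),
      A.bracket (Fin.insertNth j (x a) fun t => y (σ t)) ≠ 0 := by
  choose gx hgx using hx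
  choose gy hgy using hy
  rw [A.glt k gx gy x y hgx hgy] at h
  obtain ⟨i, -, h⟩ := Finset.exists_ne_zero_of_sum_ne_zero h
  obtain ⟨j, -, h⟩ := Finset.exists_ne_zero_of_sum_ne_zero h
  obtain ⟨σ₁, -, h⟩ := Finset.exists_ne_zero_of_sum_ne_zero h
  obtain ⟨σ₂, -, h⟩ := Finset.exists_ne_zero_of_sum_ne_zero h
  refine ⟨σ₁ i, j, σ₂, fun h0 => h ?_⟩
  rw [h0, MultilinearMap.map_update_zero, smul_zero]

end ColorGLT

namespace QMBasis

variable {F : Type} [Field F] {G : Type} [AddCommGroup G] [DecidableEq G]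
    {L : Type} [AddCommGroup L] [Module F L] {n : ℕ} {I : Type}
    {A : ColorGLT F G L n} {B : QMBasis A I}

open Function Finset Submodule

theorem phi_mono {J J' : Set (I ⊕ I)} (h : J ⊆ J') (X : Tup I n) : B.phi J X ⊆ B.phi J' X := by
  rintro p ⟨i, hi, j, hj, hmu⟩
  exact ⟨i, hi, j, h hj, hmu⟩

theorem chain_mono {J J' : Set (I ⊕ I)} (h : J ⊆ J') (Xs : List (Tup I n)) :
    B.chain J Xs ⊆ B.chain J' Xs := by
  induction Xs generalizing J J' with
  | nil => exact h
  | cons X r ih => exact ih (phi_mono h X)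

theorem chain_append (J : Set (I ⊕ I)) (Xs Ys : List (Tup I n)) :
    B.chain J (Xs ++ Ys) = B.chain (B.chain J Xs) Ys := by
  induction Xs generalizing J with
  | nil => rfl
  | cons X r ih => exact ih (B.phi J X)

theorem mem_chain_iff {J : Set (I ⊕ I)} {Xs : List (Tup I n)} {p : I ⊕ I} :
    p ∈ B.chain J Xs ↔ ∃ q ∈ J, p ∈ B.chain {q} Xs := by
  induction Xs generalizing J with
  | nil => simp [chain]
  | cons X r ih =>
    simp only [chain]
    constructor
    · intro h
      obtain ⟨q', ⟨i, hi, j, hj, hmu⟩, hp⟩ := ih.mp h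
      exact ⟨j, hj, ih.mpr ⟨q', ⟨i, hi, j, rfl, hmu⟩, hp⟩⟩
    · rintro ⟨q, hq, hp⟩
      obtain ⟨q', hq', hp'⟩ := ih.mp hp
      exact ih.mpr ⟨q', phi_mono (Set.singleton_subset_iff.mpr hq) X hq', hp'⟩

theorem inl_mem_phi_iff (J : Set (I ⊕ I)) (X : Tup I n) (a : I) :
    Sum.inl a ∈ B.phi J X ↔ Sum.inr a ∈ B.phi J X := by
  constructor <;> rintro ⟨i, hi | hi, hJ⟩ <;> cases hi
  exacts [⟨a, Or.inr rfl, hJ⟩, ⟨a, Or.inl rfl, hJ⟩]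

theorem inl_mem_chain_iff (J : Set (I ⊕ I)) {Xs : List (Tup I n)} (hXs : Xs ≠ []) (a : I) :
    Sum.inl a ∈ B.chain J Xs ↔ Sum.inr a ∈ B.chain J Xs := by
  obtain ⟨Ys, X, rfl⟩ := (List.eq_nil_or_concat Xs).resolve_left hXs
  rw [List.concat_eq_append, chain_append]
  exact inl_mem_phi_iff _ X a

theorem connected_refl (i : I) : B.Connected i i := Or.inl rfl

theorem Connected.trans {i j k : I} (hij : B.Connected i j) (hjk : B.Connected j k) :
    B.Connected i k := by
  obtain rfl | ⟨Xs, st, hXs, hst, hpre, hj⟩ := hij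
  · exact hjk
  obtain rfl | ⟨Ys, st', hYs, hst', hpre', hk⟩ := hjk
  · exact Or.inr ⟨Xs, st, hXs, hst, hpre, hj⟩
  -- `j` is reached both as `j` and as `j̄`, so the second chain can be started where the first ends
  have hst'_mem : st' ∈ B.chain {st} Xs := by
    rcases hst' with rfl | rfl
    exacts [hj, (inl_mem_chain_iff _ hXs j).mp hj]
  have hsub : ({st'} : Set (I ⊕ I)) ⊆ B.chain {st} Xs := Set.singleton_subset_iff.mpr hst'_mem
  refine Or.inr ⟨Xs ++ Ys, st, by simp [hXs], hst, fun m hm => ?_, ?_⟩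
  · rcases le_or_gt m Xs.length with hle | hlt
    · rw [List.take_append_of_le_length hle]
      rcases hle.lt_or_eq with hlt | rfl
      · exact hpre m hlt
      · rw [List.take_length]
        exact ⟨st', hst'_mem⟩
    · rw [List.take_append, List.take_of_length_le hlt.le, chain_append]
      obtain ⟨p, hp⟩ := hpre' (m - Xs.length) (by simp at hm; omega)
      exact ⟨p, chain_mono hsub _ hp⟩
  · rw [chain_append]
    exact chain_mono hsub Ys hk

theorem exists_aMem_of_eq_comp {σ : Equiv.Perm (Fin (n + 2))} {c c' : Fin (n + 2) → Option I}
    {x : Option I} (π : Equiv.Perm (Fin (n + 2))) (hc : ∀ t, c' t = c (π t))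
    (h : B.aMem σ c x) : ∃ σ', B.aMem σ' c' x := by
  have key : ∀ t, c' ((σ.trans π.symm) t) = c (σ t) := fun t => by simp [hc]
  obtain ⟨⟨z, hz, hz0⟩, htarget, hnone⟩ := h
  refine ⟨σ.trans π.symm, ⟨z, fun t => key t ▸ hz t, hz0⟩,
    fun z hz => htarget z fun t => key t ▸ hz t, fun hx => ?_⟩
  rcases hnone hx with h | h
  exacts [Or.inl fun t => hc t ▸ h _, Or.inr fun t => hc t ▸ h _]

theorem connected_of_muMem {r : I ⊕ I} {a b : I} {X : Tup I n}
    (hr : r = Sum.inl a ∨ r = Sum.inr a) (h : B.muMem (Sum.map some some r) X (some b)) :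
    B.Connected a b := by
  refine Or.inr ⟨[X], r, by simp, hr, fun m hm => ?_, ⟨b, Or.inl rfl, r, rfl, h⟩⟩
  obtain rfl : m = 0 := by simpa using hm
  exact ⟨r, rfl⟩

theorem exists_muMem_symm {q : I ⊕ I} {a b : I} {X : Tup I n}
    (hq : q = Sum.inl a ∨ q = Sum.inr a) (h : B.muMem (Sum.map some some q) X (some b)) :
    ∃ (X' : Tup I n) (r : I ⊕ I), (r = Sum.inl b ∨ r = Sum.inr b) ∧
      B.muMem (Sum.map some some r) X' (some a) := by
  obtain ⟨_ | _, c⟩ := X <;> rcases hq with rfl | rfl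
  · exact ⟨(true, c), Sum.inl b, Or.inl rfl, h⟩
  · obtain ⟨k, σ, hk⟩ := h
    refine ⟨(false, c), Sum.inr b, Or.inr rfl, k, B.exists_aMem_of_eq_comp (Equiv.swap 0 1) ?_ hk⟩
    refine Fin.cases (by simp) (Fin.cases (by simp) fun u => ?_)
    have h0 : (u.succ.succ : Fin (n + 2)) ≠ 0 := Fin.succ_ne_zero _
    have h1 : (u.succ.succ : Fin (n + 2)) ≠ 1 := (Fin.succ_injective _).ne (Fin.succ_ne_zero u)
    simp [Equiv.swap_apply_of_ne_of_ne h0 h1]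
  · exact ⟨(false, c), Sum.inl b, Or.inl rfl, h⟩
  · exact absurd h (by simp [muMem])

theorem connected_of_mem_chain (Xs : List (Tup I n)) {q : I ⊕ I} {a b : I}
    (hq : q = Sum.inl a ∨ q = Sum.inr a) (hb : Sum.inl b ∈ B.chain {q} Xs) :
    B.Connected b a := by
  induction Xs generalizing q a with
  | nil =>
    obtain rfl | rfl := hq <;> simp [chain] at hb
    exact hb ▸ connected_refl b
  | cons X r ih =>
    obtain ⟨q', ⟨i, hi, j, hj, hmu⟩, hb'⟩ := (mem_chain_iff (J := B.phi {q} X)).mp hb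
    obtain rfl : j = q := hj
    obtain ⟨X', r', hr', hmu'⟩ := exists_muMem_symm hq hmu
    exact (ih hi hb').trans (connected_of_muMem hr' hmu')

theorem Connected.symm {i j : I} (h : B.Connected i j) : B.Connected j i := by
  obtain rfl | ⟨Xs, st, -, hst, -, hj⟩ := h
  exacts [connected_refl i, connected_of_mem_chain Xs hst hj]

theorem aMem_some_iff {σ : Equiv.Perm (Fin (n + 2))} {g : Fin (n + 2) → I} {x : Option I} :
    B.aMem σ (fun t => some (g t)) x ↔ A.bracket (fun t => B.e (g (σ t))) ≠ 0 ∧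
      A.bracket (fun t => B.e (g (σ t))) ∈ B.targetSet x := by
  have hz : ∀ z : Fin (n + 2) → L, (∀ t, z t ∈ B.elemSet (some (g (σ t)))) ↔
      z = fun t => B.e (g (σ t)) := by
    simp [elemSet, funext_iff]
  simp [aMem, hz]

theorem connected_of_aMem_some {σ : Equiv.Perm (Fin (n + 2))} {g : Fin (n + 2) → I} {j : I}
    (h : B.aMem σ (fun t => some (g t)) (some j)) (a : Fin (n + 2)) : B.Connected (g a) j := by
  have hmu : B.muMem (Sum.map some some (Sum.inl (g a)))
      ((false, fun s => some (g (Equiv.swap 0 a s.succ))) : Tup I n) (some j) :=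
    B.exists_aMem_of_eq_comp (Equiv.swap 0 a) (Fin.cases (by simp) fun _ => rfl) h
  exact connected_of_muMem (Or.inl rfl) hmu

theorem connected_of_aMem_none {σ : Equiv.Perm (Fin (n + 2))} {g : Fin (n + 2) → I}
    (h : B.aMem σ (fun t => some (g t)) none) (a b : Fin (n + 2)) : B.Connected (g a) (g b) := by
  rcases eq_or_ne a b with rfl | hab
  · exact connected_refl _
  obtain ⟨π, hπ0, hπ1⟩ := Equiv.Perm.exists_apply_eq_and_apply_eq zero_ne_one hab.symm
  -- `g a` reaches `g b` through the barred step whose tuple has `v` in its first slot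
  have hmu : B.muMem (Sum.map some some (Sum.inr (g a)))
      ((false, Fin.cons none fun s => some (g (π s.succ.succ))) : Tup I n) (some (g b)) :=
    ⟨0, B.exists_aMem_of_eq_comp π
      (Fin.cases (by simp [hπ0]) (Fin.cases (by simp [hπ1]) fun _ => by simp)) h⟩
  exact connected_of_muMem (Or.inr rfl) hmu

theorem connected_of_bracket_e_ne_zero {g : Fin (n + 2) → I}
    (h : A.bracket (fun t => B.e (g t)) ≠ 0) (a b : Fin (n + 2)) : B.Connected (g a) (g b) := by
  rcases B.qm1 g with ⟨j, hj⟩ | hV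
  · have hmem := (aMem_some_iff (σ := 1) (x := some j)).mpr ⟨h, hj⟩
    exact (connected_of_aMem_some hmem a).trans (connected_of_aMem_some hmem b).symm
  · exact connected_of_aMem_none ((aMem_some_iff (σ := 1) (x := none)).mpr ⟨h, hV⟩) a b

variable (B) in
def classMonomials (k : I) : Set L :=
  B.e '' B.cls k ∪
    {z | ∃ f : Fin (n + 2) → I, (∀ s, f s ∈ B.cls k) ∧ z = A.bracket fun s => B.e (f s)}

theorem exists_mem_grading_of_mem_classMonomials {k : I} {z : L}
    (hz : z ∈ B.classMonomials k) : ∃ g, z ∈ A.grading g := by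
  rcases hz with ⟨m, -, rfl⟩ | ⟨f, -, rfl⟩
  exacts [⟨_, B.e_homog m⟩, ⟨_, A.bracket_graded _ _ fun t => B.e_homog (f t)⟩]

theorem classMonomials_subset_Jcls (k : I) : B.classMonomials k ⊆ B.Jcls k := by
  rintro _ (⟨m, hm, rfl⟩ | ⟨f, hf, rfl⟩)
  · exact mem_sup_right (subset_span ⟨m, hm, rfl⟩)
  rcases B.qm1 f with ⟨j, hj⟩ | hV
  · by_cases h0 : A.bracket (fun t => B.e (f t)) = 0
    · rw [h0]
      exact zero_mem _
    have hkj : B.Connected k j := (hf 0).trans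
      (connected_of_aMem_some ((aMem_some_iff (σ := 1) (x := some j)).mpr ⟨h0, hj⟩) 0)
    refine mem_sup_right (span_le.mpr ?_ hj)
    exact Set.singleton_subset_iff.mpr (subset_span ⟨j, hkj, rfl⟩)
  · exact mem_sup_left (mem_inf.mpr ⟨subset_span ⟨f, hf, rfl⟩, hV⟩)

theorem Jcls_eq_span_classMonomials (k : I) : B.Jcls k = span F (B.classMonomials k) :=
  le_antisymm
    (sup_le (inf_le_left.trans (span_mono Set.subset_union_right))
      (span_mono Set.subset_union_left))
    (span_le.mpr (classMonomials_subset_Jcls k))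

theorem span_iUnion_classMonomials_eq_top (ht : B.Tight) :
    span F (⋃ k, B.classMonomials k) = ⊤ := by
  have hW : B.W ≤ span F (⋃ k, B.classMonomials k) := by
    rw [← B.e_span]
    refine span_mono ?_
    rintro _ ⟨m, rfl⟩
    exact Set.mem_iUnion.mpr ⟨m, Or.inl ⟨m, connected_refl m, rfl⟩⟩
  have hV : B.V ≤ span F (⋃ k, B.classMonomials k) := by
    rcases ht with h | h
    · simp [h]
    rw [h]
    refine span_mono ?_
    rintro _ ⟨c, hμ, rfl⟩
    obtain ⟨σ, hσ⟩ : none ∈ {x : Option I | ∃ σ, B.aMem σ (fun t => some (c t)) x} := by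
      rw [hμ]
      rfl
    exact Set.mem_iUnion.mpr ⟨c 0, Or.inr ⟨c, connected_of_aMem_none hσ 0, rfl⟩⟩
  rw [eq_top_iff, ← B.compl.sup_eq_top]
  exact sup_le hV hW

variable (B) in
open Classical in
noncomputable def numNonBasisSlots (z : Fin (n + 2) → L) (κ : Fin (n + 2) → I) : ℕ :=
  #{t | z t ∉ B.e '' B.cls (κ t)}

theorem connected_of_bracket_ne_zero_of_forall_mem_image {z : Fin (n + 2) → L}
    {κ : Fin (n + 2) → I} (hz : ∀ t, z t ∈ B.e '' B.cls (κ t)) (h : A.bracket z ≠ 0)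
    (t t' : Fin (n + 2)) : B.Connected (κ t) (κ t') := by
  choose m hm hzm using hz
  obtain rfl : z = fun t => B.e (m t) := funext fun t => (hzm t).symm
  exact (hm t).trans ((connected_of_bracket_e_ne_zero h t t').trans (hm t').symm)

theorem exists_bracket_ne_zero_of_numNonBasisSlots_lt {z : Fin (n + 2) → L}
    {κ : Fin (n + 2) → I} (hz : ∀ t, z t ∈ B.classMonomials (κ t)) (h : A.bracket z ≠ 0)
    {p : Fin (n + 2)} (hp : z p ∉ B.e '' B.cls (κ p)) :
    ∃ (z' : Fin (n + 2) → L) (κ' : Fin (n + 2) → I), (∀ t, z' t ∈ B.classMonomials (κ' t)) ∧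
      A.bracket z' ≠ 0 ∧ B.numNonBasisSlots z' κ' < B.numNonBasisSlots z κ ∧
      ∀ t, ∃ t', κ' t' = κ t := by
  classical
  obtain ⟨f, hf, hzf⟩ := (hz p).resolve_left hp
  rw [← Fin.insertNth_self_removeNth p z, hzf] at h
  obtain ⟨a, j, σ, hne⟩ := A.exists_bracket_insertNth_ne_zero (fun t => ⟨_, B.e_homog (f t)⟩)
    (fun s => exists_mem_grading_of_mem_classMonomials (hz _)) h
  refine ⟨_, Fin.insertNth j (κ p) fun s => κ (p.succAbove (σ s)), ?_, hne, ?_, fun t => ?_⟩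
  · refine (Fin.forall_iff_succAbove j).mpr ⟨?_, fun s => ?_⟩
    · simp only [Fin.insertNth_apply_same]
      exact Or.inl ⟨f a, hf a, rfl⟩
    · simpa using hz _
  · have hj : B.e (f a) ∈ B.e '' B.cls (κ p) := ⟨f a, hf a, rfl⟩
    simp only [numNonBasisSlots]
    rw [Fin.card_filter_eq_card_filter_succAbove_add _ j,
      Fin.card_filter_eq_card_filter_succAbove_add _ p]
    simp only [Fin.insertNth_apply_same, Fin.insertNth_apply_succAbove, hj, hp]
    rw [σ.card_filter_comp fun s => z (p.succAbove s) ∉ B.e '' B.cls (κ (p.succAbove s))]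
    simp
  · rcases eq_or_ne t p with rfl | htp
    · exact ⟨j, by simp⟩
    · obtain ⟨s, rfl⟩ := Fin.exists_succAbove_eq htp
      exact ⟨j.succAbove (σ.symm s), by simp⟩

theorem connected_of_bracket_ne_zero {z : Fin (n + 2) → L} {κ : Fin (n + 2) → I}
    (hz : ∀ t, z t ∈ B.classMonomials (κ t)) (h : A.bracket z ≠ 0) (t t' : Fin (n + 2)) :
    B.Connected (κ t) (κ t') := by
  induction hN : B.numNonBasisSlots z κ using Nat.strong_induction_on generalizing z κ t t' with
  | _ N ih =>
    by_cases hbasis : ∀ t, z t ∈ B.e '' B.cls (κ t)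
    · exact connected_of_bracket_ne_zero_of_forall_mem_image hbasis h t t'
    push Not at hbasis
    obtain ⟨p, hp⟩ := hbasis
    obtain ⟨z', κ', hz', h', hlt, hκ'⟩ := exists_bracket_ne_zero_of_numNonBasisSlots_lt hz h hp
    obtain ⟨s, hs⟩ := hκ' t
    obtain ⟨s', hs'⟩ := hκ' t'
    rw [← hs, ← hs']
    exact ih _ (hN ▸ hlt) hz' h' s s' rfl

theorem eq_zero_of_mem_span_classMonomials (hc : A.Centerless) (ht : B.Tight) {i : I} {x : L}
    (hx : x ∈ span F (B.classMonomials i))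
    (hx' : x ∈ span F (⋃ j ∈ {j | ¬ B.Connected i j}, B.classMonomials j)) : x = 0 := by
  classical
  refine hc x fun σ y hy => ?_
  by_contra hne
  set p := σ.symm 0
  -- Expand the slots other than `p` first, so that both expansions of `x` meet the same `w`.
  have hyS : ∀ t, y (σ t) ∈ span F (update (fun _ => ⋃ k, B.classMonomials k) p {x} t) := by
    intro t
    rcases eq_or_ne t p with rfl | htp
    · simp [p, hy]
    · simp [htp, span_iUnion_classMonomials_eq_top ht]
  obtain ⟨w, hwS, hw⟩ := A.bracket.exists_ne_zero_of_forall_mem_span hyS hne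
  have hwp : w p = x := by simpa using hwS p
  have hκ : ∀ t, ∃ k, t ≠ p → w t ∈ B.classMonomials k := fun t => by
    rcases eq_or_ne t p with rfl | htp
    · exact ⟨i, fun h => absurd rfl h⟩
    · obtain ⟨k, hk⟩ := Set.mem_iUnion.mp (by simpa [htp] using hwS t)
      exact ⟨k, fun _ => hk⟩
  choose κ hκ using hκ
  have link : ∀ k, ∀ g ∈ B.classMonomials k, A.bracket (update w p g) ≠ 0 →
      ∀ t ≠ p, B.Connected k (κ t) := by
    intro k g hg hne t htp
    have hmem : ∀ s, update w p g s ∈ B.classMonomials (update κ p k s) := fun s => by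
      rcases eq_or_ne s p with rfl | hsp
      · simpa using hg
      · simpa [hsp] using hκ s hsp
    simpa [htp] using connected_of_bracket_ne_zero hmem hne p t
  have hφ : A.bracket.toLinearMap w p x ≠ 0 := by simpa [← hwp] using hw
  obtain ⟨g, hg, hgne⟩ := (A.bracket.toLinearMap w p).exists_apply_ne_zero_of_mem_span hx hφ
  obtain ⟨g', hg', hg'ne⟩ := (A.bracket.toLinearMap w p).exists_apply_ne_zero_of_mem_span hx' hφ
  obtain ⟨j, hij, hg'j⟩ : ∃ j, ¬ B.Connected i j ∧ g' ∈ B.classMonomials j := by simpa using hg'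
  have htp : p.succAbove 0 ≠ p := Fin.succAbove_ne p 0
  exact hij ((link i g hg hgne _ htp).trans (link j g' hg'j hg'ne _ htp).symm)

end QMBasis

theorem stmt10 {F : Type} [Field F] {G : Type} [AddCommGroup G] [DecidableEq G]
    {L : Type} [AddCommGroup L] [Module F L] {n : ℕ} {I : Type}
    {A : ColorGLT F G L n} (B : QMBasis A I) (hc : A.Centerless) (ht : B.Tight) :
    (⨆ i : I, B.Jcls i) = ⊤ ∧
    ∀ i : I, Disjoint (B.Jcls i) (⨆ j ∈ {j : I | ¬ B.Connected i j}, B.Jcls j) := by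
  simp only [QMBasis.Jcls_eq_span_classMonomials, ← Submodule.span_iUnion]
  refine ⟨QMBasis.span_iUnion_classMonomials_eq_top ht, fun i => ?_⟩
  rw [Submodule.disjoint_def]
  exact fun x hx hx' => QMBasis.eq_zero_of_mem_span_classMonomials hc ht hx hx'
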